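/- For integers n, s with 0 ≤ s ≤ ⌊n/3⌋ + 1, the number a(n,s) of lattice paths inside the strip 0 ≤ x ≤ n+2−2s from (0,0) to (n+2−2s, n+2) with steps (x,y)→(x±1,y+1) equals binomial(n,s) − 2·binomial(n,s−2) + binomial(n,s−4). -/

import Mathlib

open Finset
open scoped Classical
noncomputable section

/-- Position (x-coordinate) after `t` steps of the path `p`, where `true` encodes a
right step `(x,y) ↦ (x+1,y+1)` and `false` a left step `(x,y) ↦ (x-1,y+1)`. -/
def pathPos {m : ℕ} (p : Fin m → Bool) (t : ℕ) : ℤ :=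
  ∑ j : Fin m, if (j : ℕ) < t then (if p j then (1 : ℤ) else -1) else 0

/-- Generally admissible paths of size `(n,s)`: `n+2` diagonal steps starting at `(0,0)`,
the 0-th and the last step going right, with exactly `s` left steps
(hence ending at `(n+2-2s, n+2)`). -/
def admissible (n s : ℕ) : Finset (Fin (n + 2) → Bool) :=
  Finset.univ.filter (fun p =>
    (∀ j : Fin (n + 2), (j : ℕ) = 0 → p j = true) ∧
    (∀ j : Fin (n + 2), (j : ℕ) = n + 1 → p j = true) ∧
    (Finset.univ.filter (fun j => p j = false)).card = s)

/-- The path crosses the line `x = 0`, i.e. reaches x-coordinate `-1` at some time. -/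
def crossesLeft {m : ℕ} (p : Fin m → Bool) : Prop :=
  ∃ t ∈ Finset.range (m + 1), pathPos p t = -1

/-- A path of size `(n,s)` crosses the line `x = n+2-2s`,
i.e. reaches x-coordinate `n+3-2s` at some time. -/
def crossesRight (n s : ℕ) (p : Fin (n + 2) → Bool) : Prop :=
  ∃ t ∈ Finset.range (n + 3), pathPos p t = (n : ℤ) + 3 - 2 * s

/-- `L n s`: the number of generally admissible paths of size `(n,s)`
crossing the line `x = 0`. -/
def L (n s : ℕ) : ℕ := ((admissible n s).filter (fun p => crossesLeft p)).card

/-- Constrained lattice paths: `n+2` diagonal steps from `(0,0)` to `(n+2-2s, n+2)`,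
staying inside the strip `0 ≤ x ≤ n+2-2s`.  (`n` is allowed to be a negative integer,
with the convention that there are `max (n+2) 0` steps.) -/
def aPaths (n : ℤ) (s : ℕ) : Finset (Fin (n + 2).toNat → Bool) :=
  Finset.univ.filter (fun p =>
    pathPos p (n + 2).toNat = n + 2 - 2 * s ∧
    ∀ t ∈ Finset.range ((n + 2).toNat + 1),
      0 ≤ pathPos p t ∧ pathPos p t ≤ n + 2 - 2 * s)

/-- `a n s`: the number of lattice paths from `(0,0)` to `(n+2-2s, n+2)` with steps
`(x,y) ↦ (x±1, y+1)` staying inside the strip `0 ≤ x ≤ n+2-2s`. -/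
def a (n : ℤ) (s : ℕ) : ℕ := (aPaths n s).card

/-- Binomial coefficient `C(n,k)` with integer lower index, zero when `k < 0`. -/
def binom (n : ℕ) (k : ℤ) : ℕ := if k < 0 then 0 else n.choose k.toNat

/-- `b W H`: the number of lattice paths from `(0,0)` to `(W,H)` with steps
`(x,y) ↦ (x±1,y+1)` staying in the strip `0 ≤ x ≤ W`, whose first and last steps go
right, and whose intermediate steps come in consecutive same-direction pairs
`(1,2), (3,4), …, (H-3,H-2)`. -/
def bPaths (W H : ℕ) : Finset (Fin H → Bool) :=
  Finset.univ.filter (fun p =>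
    (∀ j : Fin H, (j : ℕ) = 0 → p j = true) ∧
    (∀ j : Fin H, (j : ℕ) = H - 1 → p j = true) ∧
    (∀ j1 j2 : Fin H, (j1 : ℕ) % 2 = 1 → (j2 : ℕ) = (j1 : ℕ) + 1 →
      (j1 : ℕ) + 1 ≤ H - 2 → p j1 = p j2) ∧
    pathPos p H = (W : ℤ) ∧
    ∀ t ∈ Finset.range (H + 1), 0 ≤ pathPos p t ∧ pathPos p t ≤ (W : ℤ))

def b (W H : ℕ) : ℕ := (bPaths W H).card

/-!
Write `m = n + 2` and `W = m - 2s` for the endpoint. By inclusion–exclusion, the paths in the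
strip are all paths ending at `W`, minus those touching `-1`, minus those touching `W + 1`, plus
those touching both. There are `C(m,s)` paths ending at `W`, and reflecting the part after the
first visit to `-1` (resp. `W + 1`) shows that `C(m,s-1)` of them touch that level. Since
`3s ≤ m + 1`, a path with only `s` down steps cannot descend from `W + 1` to `-1`, so a path
touching both levels touches `-1` first; reflecting at `-1` and then at `-W-3` shows there are
`C(m,s-2)` of them. Finally Pascal's rule applied twice turns
`C(n+2,s) - 2 C(n+2,s-1) + C(n+2,s-2)` into `C(n,s) - 2 C(n,s-2) + C(n,s-4)`, which is the
identity `(1+x)²(1-x)² = (1-x²)²` on generating functions.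
-/

lemma exists_le_eq_of_mem_uIcc {f : ℕ → ℤ} (hf : ∀ t, |f (t + 1) - f t| ≤ 1) {c : ℤ} {t : ℕ}
    (hc : c ∈ Set.uIcc (f 0) (f t)) : ∃ t' ≤ t, f t' = c := by
  induction t with
  | zero => exact ⟨0, le_rfl, (by simpa using hc : c = f 0).symm⟩
  | succ t ih =>
    by_cases hct : c ∈ Set.uIcc (f 0) (f t)
    · obtain ⟨t', ht', hft'⟩ := ih hct
      exact ⟨t', by omega, hft'⟩
    · refine ⟨t + 1, le_rfl, ?_⟩
      have := abs_le.mp (hf t)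
      simp only [Set.mem_uIcc] at hc hct
      omega

section Position

variable {m : ℕ}

lemma pathPos_zero (p : Fin m → Bool) : pathPos p 0 = 0 := by
  simp [pathPos]

lemma pathPos_congr {p q : Fin m → Bool} {t : ℕ} (h : ∀ j : Fin m, (j : ℕ) < t → p j = q j) :
    pathPos p t = pathPos q t :=
  Finset.sum_congr rfl fun j _ => by by_cases hj : (j : ℕ) < t <;> simp [hj, h]

lemma pathPos_of_length_le (p : Fin m → Bool) {t : ℕ} (h : m ≤ t) : pathPos p t = pathPos p m :=
  Finset.sum_congr rfl fun j _ => by simp [j.isLt, j.isLt.trans_le h]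

lemma pathPos_succ (p : Fin m → Bool) {t : ℕ} (ht : t < m) :
    pathPos p (t + 1) = pathPos p t + if p ⟨t, ht⟩ then 1 else -1 := by
  have hsplit : ∀ j : Fin m, (if (j : ℕ) < t + 1 then (if p j then (1 : ℤ) else -1) else 0) =
      (if (j : ℕ) < t then (if p j then 1 else -1) else 0) +
        if j = ⟨t, ht⟩ then (if p j then 1 else -1) else 0 := fun j => by
    by_cases hj : j = ⟨t, ht⟩
    · subst hj; simp
    · have hjt : (j : ℕ) ≠ t := fun h => hj (Fin.ext h)
      simp only [hj, if_false, add_zero]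
      split_ifs <;> first | rfl | omega
  simp only [pathPos, hsplit, Finset.sum_add_distrib, Finset.sum_ite_eq', Finset.mem_univ, if_true]

lemma abs_pathPos_succ_sub_le (p : Fin m → Bool) (t : ℕ) :
    |pathPos p (t + 1) - pathPos p t| ≤ 1 := by
  by_cases ht : t < m
  · rw [pathPos_succ p ht]; split_ifs <;> simp
  · rw [pathPos_of_length_le p (by omega : m ≤ t + 1), pathPos_of_length_le p (not_lt.mp ht)]
    simp

lemma pathPos_not (p : Fin m → Bool) (t : ℕ) : pathPos (fun j => !p j) t = -pathPos p t := by
  rw [pathPos, pathPos, ← Finset.sum_neg_distrib]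
  exact Finset.sum_congr rfl fun j _ => by cases p j <;> split_ifs <;> simp_all

lemma pathPos_eq_card_sub_card (p : Fin m → Bool) (t : ℕ) :
    pathPos p t = (#{j : Fin m | (j : ℕ) < t ∧ p j = true} : ℤ) -
      #{j : Fin m | (j : ℕ) < t ∧ p j = false} := by
  simp only [pathPos]
  rw [Finset.sum_ite, Finset.sum_const_zero, add_zero, Finset.sum_ite, Finset.sum_const,
    Finset.sum_const, Finset.filter_filter, Finset.filter_filter]
  simp [sub_eq_add_neg]

lemma pathPos_length (p : Fin m → Bool) : pathPos p m = m - 2 * #{j : Fin m | p j = false} := by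
  have hcard := Finset.card_filter_add_card_filter_not (s := univ) (fun j : Fin m => p j = false)
  simp only [Bool.not_eq_false, Finset.card_univ, Fintype.card_fin] at hcard
  rw [pathPos_eq_card_sub_card]
  simp only [Fin.is_lt, true_and]
  omega

lemma pathPos_sub_card_le (p : Fin m → Bool) {u v : ℕ} (huv : u ≤ v) :
    pathPos p u - #{j : Fin m | p j = false} ≤ pathPos p v := by
  have hup : #{j : Fin m | (j : ℕ) < u ∧ p j = true} ≤ #{j : Fin m | (j : ℕ) < v ∧ p j = true} :=
    Finset.card_le_card fun j => by
      simp only [Finset.mem_filter, Finset.mem_univ, true_and]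
      exact fun hj => ⟨by omega, hj.2⟩
  have hdown : #{j : Fin m | (j : ℕ) < v ∧ p j = false} ≤ #{j : Fin m | p j = false} :=
    Finset.card_le_card fun j => by
      simp only [Finset.mem_filter, Finset.mem_univ, true_and]
      exact And.right
  rw [pathPos_eq_card_sub_card, pathPos_eq_card_sub_card]
  omega

lemma exists_pathPos_eq_of_mem_uIcc (p : Fin m → Bool) {c : ℤ} {t : ℕ}
    (hc : c ∈ Set.uIcc 0 (pathPos p t)) : ∃ t' ≤ t, pathPos p t' = c :=
  exists_le_eq_of_mem_uIcc (abs_pathPos_succ_sub_le p) (by rwa [pathPos_zero])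

end Position

section Reflection

variable {m : ℕ}

def hits (ℓ : ℤ) (p : Fin m → Bool) : Prop := ∃ t ≤ m, pathPos p t = ℓ

lemma hits_of_mem_uIcc {p : Fin m → Bool} {ℓ : ℤ} {t : ℕ} (ht : t ≤ m)
    (hℓ : ℓ ∈ Set.uIcc 0 (pathPos p t)) : hits ℓ p :=
  let ⟨t', ht', h⟩ := exists_pathPos_eq_of_mem_uIcc p hℓ
  ⟨t', ht'.trans ht, h⟩

lemma forall_mem_strip_iff {p : Fin m → Bool} {W : ℤ} (hW : 0 ≤ W) :
    (∀ t ∈ range (m + 1), 0 ≤ pathPos p t ∧ pathPos p t ≤ W) ↔ ¬hits (-1) p ∧ ¬hits (W + 1) p := by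
  constructor
  · intro h
    constructor <;>
    · rintro ⟨t, ht, hpt⟩
      have := h t (mem_range.mpr (by omega))
      omega
  · rintro ⟨hlo, hhi⟩ t ht
    have ht : t ≤ m := Nat.lt_succ_iff.mp (mem_range.mp ht)
    constructor
    · by_contra hneg
      exact hlo (hits_of_mem_uIcc ht (Set.mem_uIcc.mpr (Or.inr ⟨by omega, by omega⟩)))
    · by_contra hbig
      exact hhi (hits_of_mem_uIcc ht (Set.mem_uIcc.mpr (Or.inl ⟨by omega, by omega⟩)))

/-- Junk (`sInf ∅ = 0`) unless `hits ℓ p`. -/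
def firstHit (ℓ : ℤ) (p : Fin m → Bool) : ℕ := sInf {t | pathPos p t = ℓ}

lemma pathPos_firstHit {ℓ : ℤ} {p : Fin m → Bool} (h : hits ℓ p) : pathPos p (firstHit ℓ p) = ℓ :=
  let ⟨t, _, ht⟩ := h
  Nat.sInf_mem (s := {t | pathPos p t = ℓ}) ⟨t, ht⟩

lemma firstHit_le {ℓ : ℤ} {p : Fin m → Bool} {t : ℕ} (ht : pathPos p t = ℓ) : firstHit ℓ p ≤ t :=
  Nat.sInf_le ht

lemma firstHit_le_length {ℓ : ℤ} {p : Fin m → Bool} (h : hits ℓ p) : firstHit ℓ p ≤ m :=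
  let ⟨_, htm, ht⟩ := h
  (firstHit_le ht).trans htm

def reflect (ℓ : ℤ) (p : Fin m → Bool) : Fin m → Bool :=
  fun j => if (j : ℕ) < firstHit ℓ p then p j else !p j

lemma pathPos_reflect_of_le (ℓ : ℤ) (p : Fin m → Bool) {t : ℕ} (ht : t ≤ firstHit ℓ p) :
    pathPos (reflect ℓ p) t = pathPos p t :=
  pathPos_congr fun j hj => if_pos (by omega)

lemma pathPos_reflect_of_ge {ℓ : ℤ} {p : Fin m → Bool} (h : hits ℓ p) {t : ℕ}
    (ht : firstHit ℓ p ≤ t) : pathPos (reflect ℓ p) t = 2 * ℓ - pathPos p t := by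
  induction t, ht using Nat.le_induction with
  | base => rw [pathPos_reflect_of_le ℓ p le_rfl, pathPos_firstHit h]; ring
  | succ t ht ih =>
    by_cases htm : t < m
    · have hflip : reflect ℓ p ⟨t, htm⟩ = !p ⟨t, htm⟩ := if_neg (by simp; omega)
      rw [pathPos_succ _ htm, pathPos_succ _ htm, ih, hflip]
      cases p ⟨t, htm⟩ <;> simp <;> ring
    · have hmt : m ≤ t := not_lt.mp htm
      rw [pathPos_of_length_le _ (hmt.trans t.le_succ),
        pathPos_of_length_le p (hmt.trans t.le_succ)]
      rwa [pathPos_of_length_le _ hmt, pathPos_of_length_le p hmt] at ih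

lemma firstHit_reflect {ℓ : ℤ} {p : Fin m → Bool} (h : hits ℓ p) :
    firstHit ℓ (reflect ℓ p) = firstHit ℓ p := by
  have hself : pathPos (reflect ℓ p) (firstHit ℓ p) = ℓ := by
    rw [pathPos_reflect_of_le ℓ p le_rfl, pathPos_firstHit h]
  refine le_antisymm (firstHit_le hself) ?_
  by_contra! hlt
  have hearlier := pathPos_firstHit ⟨_, firstHit_le_length h, hself⟩
  rw [pathPos_reflect_of_le ℓ p hlt.le] at hearlier
  exact absurd (firstHit_le hearlier) (not_le.mpr hlt)

lemma hits_reflect {ℓ : ℤ} {p : Fin m → Bool} (h : hits ℓ p) : hits ℓ (reflect ℓ p) :=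
  ⟨_, firstHit_le_length h, by rw [pathPos_reflect_of_le ℓ p le_rfl, pathPos_firstHit h]⟩

lemma reflect_reflect {ℓ : ℤ} {p : Fin m → Bool} (h : hits ℓ p) : reflect ℓ (reflect ℓ p) = p := by
  funext j
  simp only [reflect, firstHit_reflect h]
  split_ifs <;> simp

lemma card_eq_of_reflect {ℓ : ℤ} {S T : Finset (Fin m → Bool)}
    (hS : ∀ p ∈ S, hits ℓ p ∧ reflect ℓ p ∈ T) (hT : ∀ q ∈ T, hits ℓ q ∧ reflect ℓ q ∈ S) :
    #S = #T :=
  Finset.card_bij' (fun p _ => reflect ℓ p) (fun q _ => reflect ℓ q)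
    (fun p hp => (hS p hp).2) (fun q hq => (hT q hq).2)
    (fun p hp => reflect_reflect (hS p hp).1) (fun q hq => reflect_reflect (hT q hq).1)

end Reflection

section Counting

variable {m : ℕ}

def endAt (m : ℕ) (e : ℤ) : Finset (Fin m → Bool) := {p | pathPos p m = e}

def stripPaths (m : ℕ) (W : ℤ) : Finset (Fin m → Bool) :=
  {p | pathPos p m = W ∧ ∀ t ∈ range (m + 1), 0 ≤ pathPos p t ∧ pathPos p t ≤ W}

lemma card_filter_card_eq_false (k : ℕ) :
    #{p : Fin m → Bool | #{j | p j = false} = k} = m.choose k := by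
  conv_rhs => rw [← Finset.card_fin m, ← Finset.card_powersetCard]
  refine Finset.card_nbij' (fun p => ({j | p j = false} : Finset (Fin m)))
    (fun A j => decide (j ∉ A)) ?_ ?_ ?_ ?_
  · intro p hp
    simpa using hp
  · intro A hA
    simpa using (Finset.mem_powersetCard.mp hA).2
  · intro p _
    funext j
    simp
  · intro A _
    ext j
    simp

lemma card_endAt_sub_two_mul (k : ℤ) : #(endAt m (m - 2 * k)) = binom m k := by
  rcases lt_or_ge k 0 with hk | hk
  · rw [binom, if_pos hk, Finset.card_eq_zero, Finset.eq_empty_iff_forall_notMem]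
    intro p hp
    have := (Finset.mem_filter.mp hp).2
    rw [pathPos_length] at this
    omega
  · rw [binom, if_neg (not_lt.mpr hk), ← card_filter_card_eq_false]
    congr 1
    refine Finset.filter_congr fun p _ => ?_
    rw [pathPos_length]
    omega

lemma card_endAt_neg (e : ℤ) : #(endAt m (-e)) = #(endAt m e) :=
  Finset.card_nbij' (fun p j => !p j) (fun p j => !p j)
    (fun p hp => by simp_all [endAt, pathPos_not]) (fun p hp => by simp_all [endAt, pathPos_not])
    (fun p _ => by simp) (fun p _ => by simp)

lemma card_filter_hits_endAt {ℓ e : ℤ} (hℓ : ℓ ∈ Set.uIcc 0 (2 * ℓ - e)) :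
    #{p ∈ endAt m e | hits ℓ p} = #(endAt m (2 * ℓ - e)) := by
  refine card_eq_of_reflect (ℓ := ℓ) (fun p hp => ?_) (fun q hq => ?_)
  · obtain ⟨hpe, hp⟩ := Finset.mem_filter.mp hp
    refine ⟨hp, Finset.mem_filter.mpr ⟨mem_univ _, ?_⟩⟩
    rw [pathPos_reflect_of_ge hp (firstHit_le_length hp), (Finset.mem_filter.mp hpe).2]
  · have hqe := (Finset.mem_filter.mp hq).2
    have hq : hits ℓ q := hits_of_mem_uIcc le_rfl (by rwa [hqe])
    refine ⟨hq, Finset.mem_filter.mpr ⟨Finset.mem_filter.mpr ⟨mem_univ _, ?_⟩, hits_reflect hq⟩⟩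
    rw [pathPos_reflect_of_ge hq (firstHit_le_length hq), hqe]
    ring

/-- Since `3s ≤ m + 1`, a path with `s` down steps cannot descend from `W + 1` to `-1`, so it
visits `-1` before `W + 1` and a single reflection at `-1` applies. -/
lemma card_filter_hits_hits_endAt {s : ℕ} (hs : 3 * s ≤ m + 1) {W : ℤ} (hW : W = m - 2 * s) :
    #{p ∈ endAt m W | hits (-1) p ∧ hits (W + 1) p} =
      #{q ∈ endAt m (-2 - W) | hits (-W - 3) q} := by
  refine card_eq_of_reflect (ℓ := -1) (fun p hp => ?_) (fun q hq => ?_)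
  · simp only [endAt, Finset.mem_filter, Finset.mem_univ, true_and] at hp ⊢
    obtain ⟨hpe, hlo, u, hum, hpu⟩ := hp
    have hdown : (#{j | p j = false} : ℤ) = s := by rw [pathPos_length] at hpe; omega
    have hfirst : firstHit (-1) p ≤ u := by
      by_contra! hlt
      have := pathPos_sub_card_le p hlt.le
      rw [pathPos_firstHit hlo, hpu, hdown] at this
      omega
    refine ⟨hlo, ?_, u, hum, ?_⟩
    · rw [pathPos_reflect_of_ge hlo (firstHit_le_length hlo), hpe]; ring
    · rw [pathPos_reflect_of_ge hlo hfirst, hpu]; ring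
  · simp only [endAt, Finset.mem_filter, Finset.mem_univ, true_and] at hq ⊢
    obtain ⟨hqe, u, hum, hqu⟩ := hq
    have hlo : hits (-1) q := hits_of_mem_uIcc le_rfl (by rw [hqe, Set.mem_uIcc]; omega)
    obtain ⟨t, htu, hqt⟩ := exists_pathPos_eq_of_mem_uIcc q (c := -1) (t := u)
      (by rw [hqu, Set.mem_uIcc]; omega)
    have hfirst : firstHit (-1) q ≤ u := (firstHit_le hqt).trans htu
    refine ⟨hlo, ⟨?_, hits_reflect hlo, u, hum, ?_⟩⟩
    · rw [pathPos_reflect_of_ge hlo (firstHit_le_length hlo), hqe]; ring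
    · rw [pathPos_reflect_of_ge hlo hfirst, hqu]; ring

lemma card_filter_not_or {α : Type*} (S : Finset α) (P Q : α → Prop) [DecidablePred P]
    [DecidablePred Q] :
    (#{x ∈ S | ¬(P x ∨ Q x)} : ℤ) = #S - #(S.filter P) - #(S.filter Q) + #{x ∈ S | P x ∧ Q x} := by
  have hcompl := Finset.card_filter_add_card_filter_not (s := S) (fun x => P x ∨ Q x)
  have hunion := Finset.card_union_add_card_inter (S.filter P) (S.filter Q)
  rw [← Finset.filter_or, ← Finset.filter_and] at hunion
  omega

lemma card_stripPaths {s : ℕ} (hs : 3 * s ≤ m + 1) :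
    (#(stripPaths m (m - 2 * s)) : ℤ) = binom m s - 2 * binom m (s - 1) + binom m (s - 2) := by
  set W : ℤ := m - 2 * s with hW
  have hW0 : 0 ≤ W := by omega
  have hstrip : stripPaths m W = {p ∈ endAt m W | ¬(hits (-1) p ∨ hits (W + 1) p)} := by
    ext p
    simp only [stripPaths, endAt, Finset.mem_filter, Finset.mem_univ, true_and,
      forall_mem_strip_iff hW0, not_or]
  have hall : #(endAt m W) = binom m s := card_endAt_sub_two_mul s
  have hlo : #{p ∈ endAt m W | hits (-1) p} = binom m (s - 1) := by
    rw [card_filter_hits_endAt (by rw [Set.mem_uIcc]; omega),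
      show 2 * (-1) - W = -(m - 2 * (s - 1)) by omega, card_endAt_neg, card_endAt_sub_two_mul]
  have hhi : #{p ∈ endAt m W | hits (W + 1) p} = binom m (s - 1) := by
    rw [card_filter_hits_endAt (by rw [Set.mem_uIcc]; omega),
      show 2 * (W + 1) - W = m - 2 * (s - 1) by omega, card_endAt_sub_two_mul]
  have hboth : #{p ∈ endAt m W | hits (-1) p ∧ hits (W + 1) p} = binom m (s - 2) := by
    rw [card_filter_hits_hits_endAt hs hW, card_filter_hits_endAt (by rw [Set.mem_uIcc]; omega),
      show 2 * (-W - 3) - (-2 - W) = -(m - 2 * (s - 2)) by omega, card_endAt_neg,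
      card_endAt_sub_two_mul]
  rw [hstrip, card_filter_not_or, hall, hlo, hhi, hboth]
  ring

end Counting

lemma binom_succ (n : ℕ) (k : ℤ) : binom (n + 1) k = binom n k + binom n (k - 1) := by
  rcases lt_trichotomy k 0 with hk | rfl | hk
  · simp [binom, hk, show k - 1 < 0 by omega]
  · simp [binom]
  · obtain ⟨j, rfl⟩ : ∃ j : ℕ, k = j + 1 := ⟨(k - 1).toNat, by omega⟩
    simp [binom, show ¬((j : ℤ) + 1 < 0) by omega, show ¬((j : ℤ) < 0) by omega,
      Int.toNat_natCast_add_one, Nat.choose_succ_succ', add_comm]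

lemma binom_add_two (n : ℕ) (k : ℤ) :
    (binom (n + 2) k : ℤ) = binom n k + 2 * binom n (k - 1) + binom n (k - 2) := by
  rw [binom_succ, binom_succ, binom_succ n (k - 1), show k - 1 - 1 = k - 2 by ring]
  push_cast
  ring

lemma a_natCast_eq_card (n s : ℕ) :
    a (n : ℤ) s = #(stripPaths (n + 2) ((n + 2 : ℕ) - 2 * s)) := by
  have htoNat : ((n : ℤ) + 2).toNat = n + 2 := by omega
  unfold a aPaths stripPaths
  simp only [htoNat]
  push_cast
  rfl

/-- for `0 ≤ s ≤ ⌊n/3⌋ + 1`,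
`a(n,s) = C(n,s) - 2 C(n,s-2) + C(n,s-4)`. -/
theorem stmt8 (n s : ℕ) (h : s ≤ n / 3 + 1) :
    (a (n : ℤ) s : ℤ) =
      (n.choose s : ℤ) - 2 * binom n ((s : ℤ) - 2) + binom n ((s : ℤ) - 4) := by
  have hchoose : (n.choose s : ℤ) = binom n s := by simp [binom]
  rw [a_natCast_eq_card, card_stripPaths (by omega), binom_add_two, binom_add_two, binom_add_two,
    hchoose]
  ring_nf
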